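/- Let N ≥ 1, p > 1, 0 < α < 2, N < q₀ < N + αp, and R > 0. Set Φ_R(x) = (1+|x/R|²)^{-q₀/2}. Suppose that |(-Δ)Φ₁(x)| ≤ C⟨x⟩^{-N-2} and |(-Δ)^{α/2}Φ₁(x)| ≤ C⟨x⟩^{-N-α} for all x, where ⟨x⟩=(1+|x|²)^{1/2}. Then ∫_{ℝ^N} Φ_R(x)^{-1/(p-1)} |ℒΦ_R(x)|^{p/(p-1)} dx ≤ C' (R^{-2p/(p-1)+N} + R^{-αp/(p-1)+N}) for a constant C' independent of R, where ℒ = -Δ + (-Δ)^{α/2}. -/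

import Mathlib

/-!
Raising the pointwise bound `|ℒΦ_R(x)| ≤ C (R^{-2} ⟨x/R⟩^{-N-2} + R^{-α} ⟨x/R⟩^{-N-α})` to the power
`p/(p-1)` and multiplying by `Φ_R^{-1/(p-1)} = ⟨x/R⟩^{q₀/(p-1)}` leaves two powers of `⟨x/R⟩`
whose exponents are below `-N` exactly when `q₀ < N + 2p` and `q₀ < N + αp`. Both are then
integrable, and the substitution `x = R y` contributes the factor `R^N`.
-/

open MeasureTheory Module

lemma add_rpow_le_two_rpow_mul_add_rpow {x y z : ℝ} (hx : 0 ≤ x) (hy : 0 ≤ y) (hz : 0 ≤ z) :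
    (x + y) ^ z ≤ 2 ^ z * (x ^ z + y ^ z) :=
  calc (x + y) ^ z ≤ (2 * max x y) ^ z := by
        gcongr
        linarith [le_max_left x y, le_max_right x y]
    _ = 2 ^ z * max (x ^ z) (y ^ z) := by
        rw [Real.mul_rpow zero_le_two (le_max_of_le_left hx), Real.rpow_max hx hy hz]
    _ ≤ 2 ^ z * (x ^ z + y ^ z) := by
        gcongr
        exact max_le_add_of_nonneg (by positivity) (by positivity)

lemma rpow_mul_abs_add_rpow_le {u C s t a b e₁ e₂ d r : ℝ} (hu : 0 < u) (hC : 0 ≤ C)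
    (hs : 0 ≤ s) (ht : 0 ≤ t) (hr : 0 ≤ r) (ha : |a| ≤ C * u ^ e₁) (hb : |b| ≤ C * u ^ e₂) :
    u ^ d * |s * a + t * b| ^ r ≤
      (2 * C) ^ r * (s ^ r * u ^ (d + e₁ * r) + t ^ r * u ^ (d + e₂ * r)) := by
  have hsum : |s * a + t * b| ≤ s * C * u ^ e₁ + t * C * u ^ e₂ :=
    calc |s * a + t * b| ≤ s * |a| + t * |b| := by
          simpa only [abs_mul, abs_of_nonneg hs, abs_of_nonneg ht] using abs_add_le (s * a) (t * b)
      _ ≤ s * C * u ^ e₁ + t * C * u ^ e₂ := by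
          rw [mul_assoc s, mul_assoc t]
          gcongr
  have hpow (v e : ℝ) (hv : 0 ≤ v) : (v * C * u ^ e) ^ r = C ^ r * v ^ r * u ^ (e * r) := by
    rw [Real.mul_rpow (by positivity) (by positivity), Real.mul_rpow hv hC,
      ← Real.rpow_mul hu.le]
    ring
  calc u ^ d * |s * a + t * b| ^ r
      ≤ u ^ d * (2 ^ r * ((s * C * u ^ e₁) ^ r + (t * C * u ^ e₂) ^ r)) := by
        gcongr
        exact (Real.rpow_le_rpow (abs_nonneg _) hsum hr).trans
          (add_rpow_le_two_rpow_mul_add_rpow (by positivity) (by positivity) hr)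
    _ = (2 * C) ^ r * (s ^ r * u ^ (d + e₁ * r) + t ^ r * u ^ (d + e₂ * r)) := by
        rw [hpow s e₁ hs, hpow t e₂ ht, Real.mul_rpow zero_le_two hC, Real.rpow_add hu,
          Real.rpow_add hu]
        ring

lemma lt_neg_two_mul_exponent {n p q γ : ℝ} (hp : 1 < p) (hq : q < n + γ * p) :
    n < -2 * (-q / 2 * -(1 / (p - 1)) + (-n - γ) / 2 * (p / (p - 1))) := by
  have hp₁ : 0 < p - 1 := by linarith
  have key : -2 * (-q / 2 * -(1 / (p - 1)) + (-n - γ) / 2 * (p / (p - 1))) - n =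
      (n + γ * p - q) / (p - 1) := by
    field_simp
    ring
  linarith [div_pos (show 0 < n + γ * p - q by linarith) hp₁]

lemma rpow_neg_rpow_div_mul_pow {R : ℝ} (hR : 0 < R) (γ p : ℝ) (n : ℕ) :
    (R ^ (-γ)) ^ (p / (p - 1)) * R ^ n = R ^ (-(γ * p) / (p - 1) + (n : ℝ)) := by
  rw [← Real.rpow_mul hR.le, Real.rpow_add hR, Real.rpow_natCast]
  ring_nf

lemma mul_add_mul_le_add_add_one_mul {a b x y : ℝ} (ha : 0 ≤ a) (hb : 0 ≤ b) (hx : 0 ≤ x)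
    (hy : 0 ≤ y) : a * x + b * y ≤ (a + b + 1) * (x + y) := by
  nlinarith [mul_nonneg ha hy, mul_nonneg hb hx]

section Scaling

variable {E : Type*} [NormedAddCommGroup E] [InnerProductSpace ℝ E] [FiniteDimensional ℝ E]
  [MeasurableSpace E] [BorelSpace E] {μ : Measure E} [μ.IsAddHaarMeasure]

lemma integrable_one_add_norm_sq_rpow {c : ℝ} (hc : (finrank ℝ E : ℝ) < -2 * c) :
    Integrable (fun x : E ↦ (1 + ‖x‖ ^ 2) ^ c) μ := by
  simpa using integrable_rpow_neg_one_add_norm_sq (μ := μ) hc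

lemma integral_comp_inv_smul_add {f g : E → ℝ} (hf : Integrable f μ) (hg : Integrable g μ)
    {R : ℝ} (hR : 0 < R) (a b : ℝ) :
    ∫ x, (a * f (R⁻¹ • x) + b * g (R⁻¹ • x)) ∂μ =
      R ^ finrank ℝ E * (a * ∫ x, f x ∂μ + b * ∫ x, g x ∂μ) := by
  have hR' : R⁻¹ ≠ 0 := inv_ne_zero hR.ne'
  rw [integral_add ((hf.comp_smul hR').const_mul a) ((hg.comp_smul hR').const_mul b),
    integral_const_mul, integral_const_mul,
    Measure.integral_comp_inv_smul_of_nonneg μ f hR.le,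
    Measure.integral_comp_inv_smul_of_nonneg μ g hR.le, smul_eq_mul, smul_eq_mul]
  ring

lemma integral_rpow_mul_abs_add_rpow_comp_inv_smul_le {A B : E → ℝ} {C s t e₁ e₂ d r R : ℝ}
    (hC : 0 ≤ C) (hs : 0 ≤ s) (ht : 0 ≤ t) (hr : 0 ≤ r) (hR : 0 < R)
    (hA : ∀ y, |A y| ≤ C * (1 + ‖y‖ ^ 2) ^ e₁) (hB : ∀ y, |B y| ≤ C * (1 + ‖y‖ ^ 2) ^ e₂)
    (h₁ : Integrable (fun y ↦ (1 + ‖y‖ ^ 2) ^ (d + e₁ * r)) μ)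
    (h₂ : Integrable (fun y ↦ (1 + ‖y‖ ^ 2) ^ (d + e₂ * r)) μ) :
    ∫ x, (1 + ‖R⁻¹ • x‖ ^ 2) ^ d * |s * A (R⁻¹ • x) + t * B (R⁻¹ • x)| ^ r ∂μ ≤
      (2 * C) ^ r * R ^ finrank ℝ E * (s ^ r * ∫ y, (1 + ‖y‖ ^ 2) ^ (d + e₁ * r) ∂μ +
        t ^ r * ∫ y, (1 + ‖y‖ ^ 2) ^ (d + e₂ * r) ∂μ) := by
  have hR' : R⁻¹ ≠ 0 := inv_ne_zero hR.ne'
  calc _ ≤ ∫ x, (2 * C) ^ r * (s ^ r * (1 + ‖R⁻¹ • x‖ ^ 2) ^ (d + e₁ * r) +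
          t ^ r * (1 + ‖R⁻¹ • x‖ ^ 2) ^ (d + e₂ * r)) ∂μ :=
        integral_mono_of_nonneg (.of_forall fun x ↦ by positivity)
          ((((h₁.comp_smul hR').const_mul _).add ((h₂.comp_smul hR').const_mul _)).const_mul _)
          (.of_forall fun x ↦
            rpow_mul_abs_add_rpow_le (by positivity) hC hs ht hr (hA _) (hB _))
    _ = _ := by
        rw [integral_const_mul, integral_comp_inv_smul_add h₁ h₂ hR]
        ring

end Scaling

theorem mixed_operator_test_function_estimate_general (N : ℕ) (p α q₀ C : ℝ)
    (hp : 1 < p) (hα2 : α < 2) (hC : 0 < C)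
    (hq₀' : q₀ < (N : ℝ) + α * p)
    (A B : EuclideanSpace ℝ (Fin N) → ℝ)
    (hA : ∀ x, |A x| ≤ C * (1 + ‖x‖ ^ 2) ^ ((-(N : ℝ) - 2) / 2))
    (hB : ∀ x, |B x| ≤ C * (1 + ‖x‖ ^ 2) ^ ((-(N : ℝ) - α) / 2)) :
    ∃ C' : ℝ, 0 < C' ∧ ∀ R : ℝ, 0 < R →
      (∫ x : EuclideanSpace ℝ (Fin N),
          ((1 + ‖R⁻¹ • x‖ ^ 2) ^ (-q₀ / 2)) ^ (-(1 / (p - 1))) *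
            |R ^ (-(2 : ℝ)) * A (R⁻¹ • x) + R ^ (-α) * B (R⁻¹ • x)| ^ (p / (p - 1)))
        ≤ C' * (R ^ (-(2 * p) / (p - 1) + (N : ℝ)) + R ^ (-(α * p) / (p - 1) + (N : ℝ))) := by
  set r := p / (p - 1)
  set d := -q₀ / 2 * -(1 / (p - 1))
  have hint₂ : Integrable fun y : EuclideanSpace ℝ (Fin N) ↦
      (1 + ‖y‖ ^ 2) ^ (d + (-(N : ℝ) - 2) / 2 * r) :=
    integrable_one_add_norm_sq_rpow <| by
      rw [finrank_euclideanSpace_fin]; exact lt_neg_two_mul_exponent hp (by nlinarith)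
  have hintα : Integrable fun y : EuclideanSpace ℝ (Fin N) ↦
      (1 + ‖y‖ ^ 2) ^ (d + (-(N : ℝ) - α) / 2 * r) :=
    integrable_one_add_norm_sq_rpow <| by
      rw [finrank_euclideanSpace_fin]; exact lt_neg_two_mul_exponent hp hq₀'
  set J₂ := ∫ y : EuclideanSpace ℝ (Fin N), (1 + ‖y‖ ^ 2) ^ (d + (-(N : ℝ) - 2) / 2 * r)
  set Jα := ∫ y : EuclideanSpace ℝ (Fin N), (1 + ‖y‖ ^ 2) ^ (d + (-(N : ℝ) - α) / 2 * r)
  refine ⟨(2 * C) ^ r * (J₂ + Jα + 1), by positivity, fun R hR ↦ ?_⟩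
  have hweight (x : EuclideanSpace ℝ (Fin N)) :
      ((1 + ‖R⁻¹ • x‖ ^ 2) ^ (-q₀ / 2)) ^ (-(1 / (p - 1))) = (1 + ‖R⁻¹ • x‖ ^ 2) ^ d :=
    (Real.rpow_mul (by positivity) _ _).symm
  simp_rw [hweight]
  calc _ ≤ (2 * C) ^ r * R ^ N * ((R ^ (-(2 : ℝ))) ^ r * J₂ + (R ^ (-α)) ^ r * Jα) := by
        simpa only [finrank_euclideanSpace_fin] using
          integral_rpow_mul_abs_add_rpow_comp_inv_smul_le hC.le (by positivity) (by positivity)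
            (div_nonneg (by linarith) (by linarith)) hR hA hB hint₂ hintα
    _ = (2 * C) ^ r * (J₂ * R ^ (-(2 * p) / (p - 1) + (N : ℝ)) +
          Jα * R ^ (-(α * p) / (p - 1) + (N : ℝ))) := by
        linear_combination (2 * C) ^ r * J₂ * rpow_neg_rpow_div_mul_pow hR 2 p N +
          (2 * C) ^ r * Jα * rpow_neg_rpow_div_mul_pow hR α p N
    _ ≤ _ := by
        rw [mul_assoc]
        gcongr
        exact mul_add_mul_le_add_add_one_mul (by positivity) (by positivity) (by positivity)
          (by positivity)

/-- Estimate on `∫ Φ_R^{-1/(p-1)} |ℒΦ_R|^{p/(p-1)}` for the rescaled Japanese bracket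
`Φ_R(x) = (1+|x/R|²)^{-q₀/2}`, where `ℒ = -Δ + (-Δ)^{α/2}`.  The actions of the two
pieces of the operator on `Φ₁` are encoded by functions `A = (-Δ)Φ₁` and
`B = (-Δ)^{α/2}Φ₁` satisfying the pointwise bounds of Lemma 3, and
`ℒΦ_R(x) = R^{-2} A(x/R) + R^{-α} B(x/R)` by the scaling identity. -/
theorem mixed_operator_test_function_estimate (N : ℕ) (hN : 1 ≤ N) (p α q₀ C : ℝ)
    (hp : 1 < p) (hα : 0 < α) (hα2 : α < 2) (hC : 0 < C)
    (hq₀ : (N : ℝ) < q₀) (hq₀' : q₀ < (N : ℝ) + α * p)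
    (A B : EuclideanSpace ℝ (Fin N) → ℝ)
    (hA : ∀ x, |A x| ≤ C * (1 + ‖x‖ ^ 2) ^ ((-(N : ℝ) - 2) / 2))
    (hB : ∀ x, |B x| ≤ C * (1 + ‖x‖ ^ 2) ^ ((-(N : ℝ) - α) / 2)) :
    ∃ C' : ℝ, 0 < C' ∧ ∀ R : ℝ, 0 < R →
      (∫ x : EuclideanSpace ℝ (Fin N),
          ((1 + ‖R⁻¹ • x‖ ^ 2) ^ (-q₀ / 2)) ^ (-(1 / (p - 1))) *
            |R ^ (-(2 : ℝ)) * A (R⁻¹ • x) + R ^ (-α) * B (R⁻¹ • x)| ^ (p / (p - 1)))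
        ≤ C' * (R ^ (-(2 * p) / (p - 1) + (N : ℝ)) + R ^ (-(α * p) / (p - 1) + (N : ℝ))) :=
  mixed_operator_test_function_estimate_general N p α q₀ C hp hα2 hC hq₀' A B hA hB
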